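/- arXiv:1101.3647 — 2 statements merged into one kernel-verified Lean document; each statement's English description precedes it below -/
import Mathlib

section
/- Let E be a number field and let Tr : E × E → ℚ be the trace pairing (x,y) ↦ Tr_{E/ℚ}(xy). If V and W are finite-dimensional E-vector spaces and ψ : V × W → ℚ is a ℚ-bilinear form satisfying ψ(e·v, w) = ψ(v, e·w) for all e ∈ E, then there exists a unique E-bilinear form φ : V × W → E such that ψ(v,w) = Tr_{E/ℚ}(φ(v,w)) for all v, w. -/
/-!
Because the trace form of a finite separable extension `L/K` is nondegenerate, composing with
`Tr_{L/K}` is an injective `K`-linear map `Hom_L(W, L) → Hom_K(W, K)`; both sides have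
`K`-dimension `[L : K] · dim_L W`, so it is an isomorphism. Lifting each `ψ v` through it gives
`φ v`, and `Tr(e · f w) = Tr(f (e • w))` turns `ψ (e • v) w = ψ v (e • w)` into `L`-linearity
of `v ↦ φ v`.
-/

namespace Algebra

variable (K L : Type*) [Field K] [Field L] [Algebra K L]
variable (W : Type*) [AddCommGroup W] [Module L W] [Module K W] [IsScalarTower K L W]

noncomputable def traceComp : (W →ₗ[L] L) →ₗ[K] W →ₗ[K] K :=
  LinearMap.compRight K (trace K L) ∘ₗ LinearMap.restrictScalarsₗ K L W L K

variable {K L W}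

@[simp]
theorem traceComp_apply (f : W →ₗ[L] L) (w : W) : traceComp K L W f w = trace K L (f w) :=
  rfl

theorem traceComp_smul_apply (e : L) (f : W →ₗ[L] L) (w : W) :
    traceComp K L W (e • f) w = traceComp K L W f (e • w) := by
  simp

theorem traceComp_injective [FiniteDimensional K L] [Algebra.IsSeparable K L] :
    Function.Injective (traceComp K L W) := by
  refine (injective_iff_map_eq_zero _).2 fun f hf ↦ LinearMap.ext fun w ↦ ?_
  refine (traceForm_nondegenerate K L).1 (f w) fun e ↦ ?_
  simpa [mul_comm] using LinearMap.congr_fun hf (e • w)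

theorem finrank_linearMap_self_eq [FiniteDimensional K L] [FiniteDimensional L W] :
    Module.finrank K (W →ₗ[L] L) = Module.finrank K (W →ₗ[K] K) := by
  have : FiniteDimensional K W := Module.Finite.trans L W
  rw [← Module.finrank_mul_finrank K L (W →ₗ[L] L), Module.finrank_linearMap_self,
    Module.finrank_linearMap_self, Module.finrank_mul_finrank]

variable [FiniteDimensional K L] [Algebra.IsSeparable K L] [FiniteDimensional L W]

variable (K L W) in
noncomputable def traceCompEquiv : (W →ₗ[L] L) ≃ₗ[K] W →ₗ[K] K :=
  haveI : FiniteDimensional K W := Module.Finite.trans L W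
  LinearMap.linearEquivOfInjective _ traceComp_injective finrank_linearMap_self_eq

@[simp]
theorem traceComp_traceCompEquiv_symm (g : W →ₗ[K] K) :
    traceComp K L W ((traceCompEquiv K L W).symm g) = g :=
  (traceCompEquiv K L W).apply_symm_apply g

variable {V : Type*} [AddCommGroup V] [Module L V] [Module K V]
variable (ψ : V →ₗ[K] W →ₗ[K] K) (hψ : ∀ (e : L) v w, ψ (e • v) w = ψ v (e • w))

noncomputable def traceLift : V →ₗ[L] W →ₗ[L] L where
  toFun v := (traceCompEquiv K L W).symm (ψ v)
  map_add' v v' := by simp only [map_add]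
  map_smul' e v := traceComp_injective (K := K) <| LinearMap.ext fun w ↦ by
    rw [RingHom.id_apply, traceComp_smul_apply, traceComp_traceCompEquiv_symm,
      traceComp_traceCompEquiv_symm, hψ]

theorem traceComp_traceLift (v : V) : traceComp K L W (traceLift ψ hψ v) = ψ v :=
  traceComp_traceCompEquiv_symm (ψ v)

theorem trace_traceLift_apply (v : V) (w : W) : trace K L (traceLift ψ hψ v w) = ψ v w :=
  LinearMap.congr_fun (traceComp_traceLift ψ hψ v) w

theorem eq_traceLift {φ : V →ₗ[L] W →ₗ[L] L} (hφ : ∀ v w, ψ v w = trace K L (φ v w)) :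
    φ = traceLift ψ hψ :=
  LinearMap.ext fun v ↦ traceComp_injective (K := K) <| by
    rw [traceComp_traceLift]
    exact LinearMap.ext fun w ↦ (hφ v w).symm

end Algebra

theorem exists_unique_bilinear_lift_of_trace_general
    {E : Type*} [Field E] [NumberField E]
    {V W : Type*} [AddCommGroup V] [Module E V]
    [AddCommGroup W] [Module E W] [FiniteDimensional E W]
    [Module ℚ V] [Module ℚ W] [IsScalarTower ℚ E W]
    (ψ : V →ₗ[ℚ] W →ₗ[ℚ] ℚ)
    (hψ : ∀ (e : E) (v : V) (w : W), ψ (e • v) w = ψ v (e • w)) :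
    ∃! φ : V →ₗ[E] W →ₗ[E] E,
      ∀ (v : V) (w : W), ψ v w = Algebra.trace ℚ E (φ v w) :=
  ⟨Algebra.traceLift ψ hψ, fun v w ↦ (Algebra.trace_traceLift_apply ψ hψ v w).symm,
    fun _ ↦ Algebra.eq_traceLift ψ hψ⟩

/-- If `ψ : V × W → ℚ` is a `ℚ`-bilinear form on finite-dimensional `E`-vector spaces
satisfying `ψ(e·v, w) = ψ(v, e·w)`, then there is a unique `E`-bilinear form `φ` with
`ψ(v,w) = Tr_{E/ℚ}(φ(v,w))`. -/
theorem exists_unique_bilinear_lift_of_trace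
    {E : Type*} [Field E] [NumberField E]
    {V W : Type*} [AddCommGroup V] [Module E V] [FiniteDimensional E V]
    [AddCommGroup W] [Module E W] [FiniteDimensional E W]
    [Module ℚ V] [IsScalarTower ℚ E V] [Module ℚ W] [IsScalarTower ℚ E W]
    (ψ : V →ₗ[ℚ] W →ₗ[ℚ] ℚ)
    (hψ : ∀ (e : E) (v : V) (w : W), ψ (e • v) w = ψ v (e • w)) :
    ∃! φ : V →ₗ[E] W →ₗ[E] E,
      ∀ (v : V) (w : W), ψ v w = Algebra.trace ℚ E (φ v w) :=
  exists_unique_bilinear_lift_of_trace_general ψ hψ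
end

section
/- Let F be a closed subset of ℂⁿ (with the Euclidean topology) that is not contained in any countable union of proper algebraic subvarieties of ℂⁿ. If for every field automorphism σ of ℂ the set σ(F) = {(σ(x₁),…,σ(xₙ)) : (x₁,…,xₙ) ∈ F} is closed in ℂⁿ, then F = ℂⁿ. -/
/-!
Call a set of points *generic* if all their coordinates are jointly algebraically independent
over `ℚ`. Over a countable independent family `w`, the points `x` for which `(x, w)` fails to be
independent lie on countably many hypersurfaces, defined over the countable ring `ℚ[w]`. Since
`F` is not covered by such hypersurfaces, and by Baire's theorem no nonempty open set is either,
one can build inductively a generic sequence `x₀, y₀, x₁, y₁, …` with `xₘ ∈ F` and `yₘ` in the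
`m`-th open set of a countable basis. Countable independent families in `ℂ` extend to
transcendence bases of the same cardinality `𝔠` with complements of the same cardinality, so some
automorphism `σ` of `ℂ` maps each `xₘ` to `yₘ`. Then `σ(F)` is closed and dense, hence all of
`ℂⁿ`, and so is `F`.
-/

open MvPolynomial Cardinal Set Function

instance MvPolynomial.countable {σ R : Type*} [CommSemiring R] [Countable σ] [Countable R] :
    Countable (MvPolynomial σ R) :=
  AddMonoidAlgebra.coeff_injective.countable

theorem MvPolynomial.dense_setOf_eval_ne_zero {σ K : Type*} [NontriviallyNormedField K]
    [Fintype σ] {p : MvPolynomial σ K} (hp : p ≠ 0) : Dense {x : σ → K | eval x p ≠ 0} := by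
  refine dense_iff_inter_open.2 fun U hU ⟨a, ha⟩ => ?_
  by_contra! hUp
  obtain ⟨ε, hε, hball⟩ := Metric.isOpen_iff.1 hU a ha
  refine hp (funext_set (fun i => Metric.ball (a i) ε) (fun i => ?_) fun x hx => ?_)
  · exact infinite_of_mem_nhds (a i) (Metric.ball_mem_nhds _ hε)
  · rw [← ball_pi a hε] at hx
    by_contra h
    exact hUp.subset ⟨hball hx, h⟩

def IsCoveredByCountablyManyHypersurfaces {σ K : Type*} [CommRing K] (S : Set (σ → K)) : Prop :=
  ∃ p : ℕ → MvPolynomial σ K, (∀ i, p i ≠ 0) ∧ S ⊆ ⋃ i, {x | eval x (p i) = 0}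

namespace IsCoveredByCountablyManyHypersurfaces

variable {σ K : Type*}

theorem mono [CommRing K] {S T : Set (σ → K)} (hT : IsCoveredByCountablyManyHypersurfaces T)
    (hST : S ⊆ T) : IsCoveredByCountablyManyHypersurfaces S :=
  let ⟨p, hp, hTp⟩ := hT
  ⟨p, hp, hST.trans hTp⟩

theorem interior_eq_empty [NontriviallyNormedField K] [CompleteSpace K] [Fintype σ]
    {S : Set (σ → K)} (hS : IsCoveredByCountablyManyHypersurfaces S) : interior S = ∅ := by
  obtain ⟨p, hp, hSp⟩ := hS
  have hdense : Dense (⋂ i, {x | eval x (p i) ≠ 0}) :=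
    dense_iInter_of_isOpen (fun i => isOpen_ne_fun (continuous_eval _) continuous_const)
      fun i => dense_setOf_eval_ne_zero (hp i)
  refine not_nonempty_iff_eq_empty.1 fun hne => ?_
  obtain ⟨x, hxS, hx⟩ := hdense.inter_open_nonempty _ isOpen_interior hne
  obtain ⟨i, hi⟩ := mem_iUnion.1 (hSp (interior_subset hxS))
  exact mem_iInter.1 hx i hi

end IsCoveredByCountablyManyHypersurfaces

theorem isCoveredByCountablyManyHypersurfaces_setOf_not_algebraicIndependent {σ A K : Type*}
    [CommRing A] [Countable A] [CommRing K] [Nontrivial K] [Algebra A K] [Countable σ]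
    (hA : Injective (algebraMap A K)) :
    IsCoveredByCountablyManyHypersurfaces {x : σ → K | ¬ AlgebraicIndependent A x} := by
  have : Nontrivial A := (algebraMap A K).domain_nontrivial
  have : Nonempty {q : MvPolynomial σ A // q ≠ 0} := ⟨⟨1, one_ne_zero⟩⟩
  obtain ⟨q, hq⟩ := exists_surjective_nat {q : MvPolynomial σ A // q ≠ 0}
  refine ⟨fun i => map (algebraMap A K) (q i), fun i => ?_, fun x hx => ?_⟩
  · exact (map_injective _ hA).ne_iff' (map_zero _) |>.2 (q i).2
  · obtain ⟨r, hr, hr0⟩ := not_forall₂.1 (mt algebraicIndependent_iff.2 hx)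
    obtain ⟨i, hi⟩ := hq ⟨r, hr0⟩
    exact mem_iUnion.2 ⟨i, by simpa [hi, eval_map, aeval_def] using hr⟩

theorem exists_mem_algebraicIndependent_sumElim {R K σ ι : Type*} [CommRing R] [Countable R]
    [CommRing K] [Nontrivial K] [Algebra R K] [Countable σ] [Countable ι] {w : ι → K}
    (hw : AlgebraicIndependent R w) {S : Set (σ → K)}
    (hS : ¬ IsCoveredByCountablyManyHypersurfaces S) :
    ∃ x ∈ S, AlgebraicIndependent R (Sum.elim x w) := by
  have : Countable (Algebra.adjoin R (range w)) := Countable.of_equiv _ hw.aevalEquiv.toEquiv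
  by_contra! h
  exact hS <| (isCoveredByCountablyManyHypersurfaces_setOf_not_algebraicIndependent
    Subtype.val_injective).mono fun x hx hind => h x hx (hw.sumElim hind)

theorem exists_seq_forall_mem_of_forall_exists_snoc {α : Type*} (target : ℕ → Set α)
    (P : ∀ k, (Fin k → α) → Prop) (h0 : P 0 Fin.elim0)
    (hstep : ∀ k v, P k v → ∃ x ∈ target k, P (k + 1) (Fin.snoc v x)) :
    ∃ z : ℕ → α, ∀ k, z k ∈ target k ∧ P k fun i => z i := by
  choose next hnext hP using hstep
  let init : ∀ k, {v : Fin k → α // P k v} := fun k =>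
    Nat.rec ⟨Fin.elim0, h0⟩ (fun k v => ⟨Fin.snoc v.1 (next k v.1 v.2), hP _ _ v.2⟩) k
  have hinit : ∀ k, (fun i : Fin k => next i (init i).1 (init i).2) = (init k).1 := by
    intro k
    induction k with
    | zero => exact funext fun i => i.elim0
    | succ k ih =>
      funext i
      refine Fin.lastCases ?_ (fun j => ?_) i
      · simp [init]
      · simp [init, ← ih]
  exact ⟨fun k => next k (init k).1 (init k).2, fun k => ⟨hnext _ _ _, hinit k ▸ (init k).2⟩⟩

section AlgebraicIndependent

variable {R A σ : Type*} [CommRing R] [CommRing A] [Algebra R A]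

theorem AlgebraicIndependent.snoc_of_sumElim {k : ℕ} {v : Fin k → σ → A} {x : σ → A}
    (h : AlgebraicIndependent R (Sum.elim x fun p : Fin k × σ => v p.1 p.2)) :
    AlgebraicIndependent R fun p : Fin (k + 1) × σ =>
      (Fin.snoc v x : Fin (k + 1) → σ → A) p.1 p.2 := by
  let e : Fin (k + 1) × σ ≃ σ ⊕ Fin k × σ :=
    (finSuccEquivLast.prodCongr (Equiv.refl σ)).trans optionProdEquiv
  convert h.comp e e.injective with p
  obtain ⟨i, s⟩ := p
  refine Fin.lastCases ?_ (fun j => ?_) i <;> simp [e]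

theorem AlgebraicIndependent.of_forall_fin {z : ℕ → σ → A}
    (h : ∀ k, AlgebraicIndependent R fun p : Fin k × σ => z p.1 p.2) :
    AlgebraicIndependent R fun p : ℕ × σ => z p.1 p.2 := by
  refine algebraicIndependent_of_finite_type fun t ht => ?_
  obtain ⟨k, hk⟩ := (ht.image Prod.fst).bddAbove
  let f : t → Fin (k + 1) × σ := fun p => (⟨p.1.1, Nat.lt_succ_of_le (hk ⟨p, p.2, rfl⟩)⟩, p.1.2)
  have hf : Injective f := fun p q hpq =>
    Subtype.ext (Prod.ext congr(($hpq).1.val) congr(($hpq).2))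
  exact (h (k + 1)).comp f hf

end AlgebraicIndependent

theorem exists_algebraicIndependent_forall_mem {R K σ J : Type*} [CommRing R] [Countable R]
    [CommRing K] [Nontrivial K] [Algebra R K] [FaithfulSMul R K] [Countable σ] [Denumerable J]
    (target : J → Set (σ → K))
    (htarget : ∀ j, ¬ IsCoveredByCountablyManyHypersurfaces (target j)) :
    ∃ z : J → σ → K, (∀ j, z j ∈ target j) ∧ AlgebraicIndependent R fun p : J × σ => z p.1 p.2 := by
  obtain ⟨z, hz⟩ := exists_seq_forall_mem_of_forall_exists_snoc (target ∘ Denumerable.ofNat J)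
    (fun k v => AlgebraicIndependent R fun p : Fin k × σ => v p.1 p.2)
    (algebraicIndependent_empty_type_iff.2 (FaithfulSMul.algebraMap_injective R K))
    fun k v hv => (exists_mem_algebraicIndependent_sumElim hv (htarget _)).imp
      fun x hx => ⟨hx.1, hx.2.snoc_of_sumElim⟩
  have hind : AlgebraicIndependent R fun p : ℕ × σ => z p.1 p.2 :=
    .of_forall_fin fun k => (hz k).2
  refine ⟨fun j => z (Encodable.encode j), fun j => by simpa using (hz (Encodable.encode j)).1, ?_⟩
  exact hind.comp (Prod.map Encodable.encode id) (Encodable.encode_injective.prodMap injective_id)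

namespace IsAlgClosed

variable {R K L ι κ : Type*} [CommRing R] [Field K] [Algebra R K] [Field L] [Algebra R L]
  [IsAlgClosed K] [IsAlgClosed L]

theorem equivOfTranscendenceBasis_apply {v : ι → K} {w : κ → L} (e : ι ≃ κ)
    (hv : IsTranscendenceBasis R v) (hw : IsTranscendenceBasis R w) (i : ι) :
    equivOfTranscendenceBasis v w e hv hw (v i) = w (e i) := by
  let := isAlgClosure_of_transcendence_basis v hv
  let := isAlgClosure_of_transcendence_basis w hw
  have hvi : v i = algebraMap (Algebra.adjoin R (range v)) K (hv.1.aevalEquiv (X i)) := by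
    rw [hv.1.algebraMap_aevalEquiv, aeval_X]
  rw [hvi]
  unfold equivOfTranscendenceBasis
  rw [IsAlgClosure.equivOfEquiv_algebraMap]
  simp

theorem exists_ringEquiv_apply_eq [Nontrivial R] [Countable R] [Countable ι] (hK : ℵ₀ < #K)
    {x y : ι → K} (hx : AlgebraicIndependent R x) (hy : AlgebraicIndependent R y) :
    ∃ σ : K ≃+* K, ∀ i, σ (x i) = y i := by
  have hcard {B : Set K} (hB : IsTranscendenceBasis R ((↑) : B → K)) : #B = #K := by
    simpa using (cardinal_eq_cardinal_transcendence_basis_of_aleph0_lt _ hB mk_le_aleph0 hK).symm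
  obtain ⟨B, hxB, hB⟩ := exists_isTranscendenceBasis_superset hx.to_subtype_range
  obtain ⟨B', hyB', hB'⟩ := exists_isTranscendenceBasis_superset hy.to_subtype_range
  let xB : ι ↪ B := ⟨fun i => ⟨x i, hxB ⟨i, rfl⟩⟩, fun i j h => hx.injective congr($h.1)⟩
  let yB' : ι ↪ B' := ⟨fun i => ⟨y i, hyB' ⟨i, rfl⟩⟩, fun i j h => hy.injective congr($h.1)⟩
  have hrange : #(range xB) < #B := (countable_range xB).le_aleph0.trans_lt (hcard hB ▸ hK)
  obtain ⟨g, hg⟩ := extend_function_of_lt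
    ((Equiv.ofInjective xB xB.injective).symm.toEmbedding.trans yB') hrange
    (Cardinal.eq.1 ((hcard hB).trans (hcard hB').symm))
  refine ⟨equivOfTranscendenceBasis _ _ g hB hB', fun i => ?_⟩
  rw [show x i = xB i from rfl, equivOfTranscendenceBasis_apply, hg ⟨xB i, i, rfl⟩]
  simp only [Embedding.trans_apply, Equiv.coe_toEmbedding, Equiv.ofInjective_symm_apply]
  rfl

end IsAlgClosed

theorem closed_galois_stable_not_in_countable_union_eq_univ_general
    {n : ℕ} (F : Set (Fin n → ℂ))
    (hnot : ∀ p : ℕ → MvPolynomial (Fin n) ℂ, (∀ i, p i ≠ 0) →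
      ¬ (F ⊆ ⋃ i, {x | eval x (p i) = 0}))
    (hgal : ∀ σ : ℂ ≃+* ℂ, IsClosed ((fun x : Fin n → ℂ => fun j => σ (x j)) '' F)) :
    F = Set.univ := by
  obtain ⟨b, hbc, hbe, hb⟩ := TopologicalSpace.exists_countable_basis (Fin n → ℂ)
  obtain ⟨u, rfl⟩ := hbc.exists_eq_range (.of_sUnion_eq_univ hb.sUnion_eq)
  have hu (m : ℕ) : ¬ IsCoveredByCountablyManyHypersurfaces (u m) := fun h => hbe <| by
    rw [← h.interior_eq_empty, (hb.isOpen ⟨m, rfl⟩).interior_eq]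
    exact ⟨m, rfl⟩
  have hF : ¬ IsCoveredByCountablyManyHypersurfaces F := fun ⟨p, hp, hFp⟩ => hnot p hp hFp
  have htarget : ∀ j, ¬ IsCoveredByCountablyManyHypersurfaces (Sum.elim (fun _ : ℕ => F) u j) :=
    Sum.forall.2 ⟨fun _ => hF, hu⟩
  obtain ⟨z, hz, hind⟩ := exists_algebraicIndependent_forall_mem (R := ℚ) _ htarget
  have hℂ : ℵ₀ < #ℂ := mk_complex ▸ aleph0_lt_continuum
  obtain ⟨σ, hσ⟩ := IsAlgClosed.exists_ringEquiv_apply_eq hℂ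
    (hind.comp (Prod.map Sum.inl id) (Sum.inl_injective.prodMap injective_id))
    (hind.comp (Prod.map Sum.inr id) (Sum.inr_injective.prodMap injective_id))
  set σF := (fun x : Fin n → ℂ => fun j => σ (x j)) '' F
  have hdense : Dense σF := hb.dense_iff.2 fun _ ⟨m, hm⟩ _ =>
    ⟨z (.inr m), hm ▸ hz (.inr m), z (.inl m), hz (.inl m), funext fun j => hσ (m, j)⟩
  have hσF : σF = Set.univ := (hgal σ).closure_eq.symm.trans hdense.closure_eq
  refine eq_univ_of_forall fun v => ?_
  obtain ⟨x, hx, hxv⟩ : (fun j => σ (v j)) ∈ σF := hσF ▸ mem_univ _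
  exact funext (fun j => σ.injective (congrFun hxv j)) ▸ hx

/-- A closed subset `F ⊆ ℂⁿ` not contained in any countable union of proper algebraic
subvarieties, all of whose conjugates by field automorphisms of `ℂ` are closed, must be
all of `ℂⁿ`. -/
theorem closed_galois_stable_not_in_countable_union_eq_univ
    {n : ℕ} (F : Set (Fin n → ℂ)) (hF : IsClosed F)
    (hnot : ∀ p : ℕ → MvPolynomial (Fin n) ℂ, (∀ i, p i ≠ 0) →
      ¬ (F ⊆ ⋃ i, {x | eval x (p i) = 0}))
    (hgal : ∀ σ : ℂ ≃+* ℂ, IsClosed ((fun x : Fin n → ℂ => fun j => σ (x j)) '' F)) :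
    F = Set.univ :=
  closed_galois_stable_not_in_countable_union_eq_univ_general F hnot hgal
end
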